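/- Assume n_{j_0} ≥ 2 for some j_0 ∈ G_y and put τ_0 := ((1,j_0),(n_{j_0},j_0)). Let A_{5,r} := ⌊log(q̲² η̲_r)/(r·log ā)⌋ and T_{1,r} := ⌊(A_1 + A_{5,r} + 3)/A_4⌋. Then for every n > T_{1,r} and all σ, ω ∈ Λ_{n,r} with σ_L a proper initial segment of ω_L, and for any bar-extensions σ̄ of σ and ω̄ of ω, the words σ̄_y and ω̄_y are incomparable. -/

import Mathlib

open Filter MeasureTheory
open scoped BigOperators ENNReal NNReal Topology

namespace LGQ

noncomputable section

/-- The alphabet `G = {(i,j) : 1 ≤ i ≤ n_j, 1 ≤ j ≤ m}`, encoded as a sigma type: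
an element is `⟨j, i⟩` with `j : Fin m` (the `y`-coordinate) and `i : Fin (n j)`. -/
abbrev Alph (m : ℕ) (n : Fin m → ℕ) := Σ j : Fin m, Fin (n j)

/-- A pair `σ = (σ_L, σ_R)` with `σ_L ∈ G^*` and `σ_R ∈ G_y^*`. -/
abbrev Wd (m : ℕ) (n : Fin m → ℕ) := List (Alph m n) × List (Fin m)

variable {m : ℕ} {n : Fin m → ℕ}

/-- `a_ω := ∏ a_{i_h j_h}` along a word `ω ∈ G^*`. -/
def aP (a : Alph m n → ℝ) (w : List (Alph m n)) : ℝ := (w.map a).prod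

/-- `b_τ := ∏ b_{j_h}` along a word `τ ∈ G_y^*`. -/
def bP (b : Fin m → ℝ) (τ : List (Fin m)) : ℝ := (τ.map b).prod

/-- `σ_y := (σ_L)_y ∗ σ_R` : the `y`-word of a pair `σ = σ_L ∗ σ_R`. -/
def sy (σ : Wd m n) : List (Fin m) := σ.1.map Sigma.fst ++ σ.2

/-- `Ψ_l := {σ = σ_L ∗ σ_R : σ_L ∈ G^l, σ_R ∈ G_y^*, b_{(σ_y)^-} ≥ a_{σ_L} > b_{σ_y}}`. -/
def Psi (a : Alph m n → ℝ) (b : Fin m → ℝ) (l : ℕ) : Set (Wd m n) :=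
  {σ | σ.1.length = l ∧ 1 ≤ σ.2.length ∧
    aP a σ.1 ≤ bP b (sy σ).dropLast ∧ bP b (sy σ) < aP a σ.1}

/-- `Ψ^* := ⋃_{l ≥ 1} Ψ_l`. -/
def PsiStar (a : Alph m n → ℝ) (b : Fin m → ℝ) : Set (Wd m n) :=
  {σ | ∃ l, 1 ≤ l ∧ σ ∈ Psi a b l}

/-- `q_j := Σ_{i=1}^{n_j} p_{ij}`. -/
def qf (p : Alph m n → ℝ) (j : Fin m) : ℝ := ∑ i : Fin (n j), p ⟨j, i⟩

/-- `p_{σ_L} := ∏ p_{i_h j_h}`. -/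
def pP (p : Alph m n → ℝ) (w : List (Alph m n)) : ℝ := (w.map p).prod

/-- `q_{σ_R} := ∏ q_{j_h}`. -/
def qP (p : Alph m n → ℝ) (τ : List (Fin m)) : ℝ := (τ.map (qf p)).prod

/-- `E_r(σ) := p_{σ_L} q_{σ_R} a_{σ_L}^r` (note `E_r(θ) = 1`). -/
def Er (a p : Alph m n → ℝ) (r : ℝ) (σ : Wd m n) : ℝ :=
  pP p σ.1 * qP p σ.2 * aP a σ.1 ^ r

/-- `a̲ := min a_{ij}`. -/
def aLo (a : Alph m n → ℝ) : ℝ := ⨅ g, a g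

/-- `ā := max a_{ij}`. -/
def aHi (a : Alph m n → ℝ) : ℝ := ⨆ g, a g

/-- `b̲ := min b_j`. -/
def bLo (b : Fin m → ℝ) : ℝ := ⨅ j, b j

/-- `b̄ := max b_j`. -/
def bHi (b : Fin m → ℝ) : ℝ := ⨆ j, b j

/-- `p̲ := min p_{ij}`. -/
def pLo (p : Alph m n → ℝ) : ℝ := ⨅ g, p g

/-- `q̲ := min q_j`. -/
def qLo (p : Alph m n → ℝ) : ℝ := ⨅ j, qf p j

/-- `A_1 := ⌊log a̲ / log b̄⌋ + 1`. -/
def A1 (a : Alph m n → ℝ) (b : Fin m → ℝ) : ℤ :=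
  ⌊Real.log (aLo a) / Real.log (bHi b)⌋ + 1

/-- `A_2 := ⌊log b̲ / log ā⌋ + 1`. -/
def A2 (a : Alph m n → ℝ) (b : Fin m → ℝ) : ℤ :=
  ⌊Real.log (bLo b) / Real.log (aHi a)⌋ + 1

/-- `A_3 := max_{(i,j)∈G} a_{ij}/b_j`. -/
def A3 (a : Alph m n → ℝ) (b : Fin m → ℝ) : ℝ := ⨆ g : Alph m n, a g / b g.1

/-- `A_4 := log A_3 / log b̲`. -/
def A4 (a : Alph m n → ℝ) (b : Fin m → ℝ) : ℝ := Real.log (A3 a b) / Real.log (bLo b)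

/-- `A_6 := ⌊1/A_4⌋`. -/
def A6 (a : Alph m n → ℝ) (b : Fin m → ℝ) : ℤ := ⌊1 / A4 a b⌋

/-- `η̲_r := p̲ q̲^{A_1} a̲^r`. -/
def etaLo (a : Alph m n → ℝ) (b : Fin m → ℝ) (p : Alph m n → ℝ) (r : ℝ) : ℝ :=
  pLo p * qLo p ^ A1 a b * aLo a ^ r

/-- `A_{5,r} := ⌊log(q̲² η̲_r)/(r·log ā)⌋`. -/
def A5 (a : Alph m n → ℝ) (b : Fin m → ℝ) (p : Alph m n → ℝ) (r : ℝ) : ℤ :=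
  ⌊Real.log (qLo p ^ 2 * etaLo a b p r) / (r * Real.log (aHi a))⌋

/-- `T_{1,r} := ⌊(A_1 + A_{5,r} + 3)/A_4⌋`. -/
def T1 (a : Alph m n → ℝ) (b : Fin m → ℝ) (p : Alph m n → ℝ) (r : ℝ) : ℤ :=
  ⌊((A1 a b + A5 a b p r + 3 : ℤ) : ℝ) / A4 a b⌋

/-- `ρ = σ^♭`:  for `σ ∈ Ψ_1`, `σ^♭ = θ`; for `σ ∈ Ψ_l` with `l ≥ 2`, `σ^♭` is the unique
`ρ ∈ Ψ_{l-1}` with `ρ_L = (σ_L)^-` and `ρ_y` an initial segment of `σ_y`. -/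
def IsFlat (a : Alph m n → ℝ) (b : Fin m → ℝ) (σ ρ : Wd m n) : Prop :=
  (σ.1.length = 1 ∧ ρ = (([], []) : Wd m n)) ∨
  (2 ≤ σ.1.length ∧ ρ ∈ Psi a b (σ.1.length - 1) ∧ ρ.1 = σ.1.dropLast ∧ sy ρ <+: sy σ)

/-- `Λ_{n,r} := {σ ∈ Ψ^* : E_r(σ^♭) ≥ η̲_r^n > E_r(σ)}`. -/
def Lam (a : Alph m n → ℝ) (b : Fin m → ℝ) (p : Alph m n → ℝ) (r : ℝ) (N : ℕ) :
    Set (Wd m n) :=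
  {σ | σ ∈ PsiStar a b ∧ ∃ ρ : Wd m n, IsFlat a b σ ρ ∧
    etaLo a b p r ^ N ≤ Er a p r ρ ∧ Er a p r σ < etaLo a b p r ^ N}

/-- `S_{n,r} := {σ ∈ Ψ^* : η̲_r^{n+1} ≤ E_r(σ) < η̲_r^n}`. -/
def Snr (a : Alph m n → ℝ) (b : Fin m → ℝ) (p : Alph m n → ℝ) (r : ℝ) (N : ℕ) :
    Set (Wd m n) :=
  {σ | σ ∈ PsiStar a b ∧ etaLo a b p r ^ (N + 1) ≤ Er a p r σ ∧
    Er a p r σ < etaLo a b p r ^ N}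

/-- `G_1(σ) := {ω ∈ S_{n,r} : σ_L ⪯ ω_L and σ_y ⪯ ω_y}`. -/
def G1 (a : Alph m n → ℝ) (b : Fin m → ℝ) (p : Alph m n → ℝ) (r : ℝ) (N : ℕ)
    (σ : Wd m n) : Set (Wd m n) :=
  {ω | ω ∈ Snr a b p r N ∧ σ.1 <+: ω.1 ∧ sy σ <+: sy ω}

/-- `Λ_h(σ) := {ρ ∈ Φ_{l+h} : σ ⪯ ρ}` (componentwise order on pairs). -/
def LamH (a : Alph m n → ℝ) (b : Fin m → ℝ) (σ : Wd m n) (h : ℕ) : Set (Wd m n) :=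
  {ρ | ρ ∈ Psi a b (σ.1.length + h) ∧ σ.1 <+: ρ.1 ∧ σ.2 <+: ρ.2}

/-- `I_{k,r}(t) := Σ_{ω∈Φ_k} E_r(ω)^t`. -/
def Ih (a : Alph m n → ℝ) (b : Fin m → ℝ) (p : Alph m n → ℝ) (r : ℝ) (k : ℕ) (t : ℝ) : ℝ :=
  ∑' ω : Psi a b k, Er a p r ω.1 ^ t

/-- `Υ_n(t,s) := Σ_{σ∈Ψ_n} (p_{σ_L} q_{σ_R})^t a_{σ_L}^s`. -/
def Ups (a : Alph m n → ℝ) (b : Fin m → ℝ) (p : Alph m n → ℝ) (N : ℕ) (t s : ℝ) : ℝ :=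
  ∑' σ : Psi a b N, (pP p σ.1.1 * qP p σ.1.2) ^ t * aP a σ.1.1 ^ s

/-- `τ_0 := ((1,j_0),(n_{j_0},j_0))`. -/
def tau0 (j0 : Fin m) (h : 2 ≤ n j0) : List (Alph m n) :=
  [⟨j0, ⟨0, by omega⟩⟩, ⟨j0, ⟨n j0 - 1, by omega⟩⟩]

/-- `σ̄` is a bar-extension of `σ ∈ Ψ_l`: `σ̄ ∈ Ψ_{l+2}`, `σ̄_L = σ_L ∗ τ_0`, `σ_R ⪯ σ̄_R`. -/
def BarExt (a : Alph m n → ℝ) (b : Fin m → ℝ) (j0 : Fin m) (h : 2 ≤ n j0)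
    (σ σb : Wd m n) : Prop :=
  σb ∈ Psi a b (σ.1.length + 2) ∧ σb.1 = σ.1 ++ tau0 j0 h ∧ σ.2 <+: σb.2

/-- cylinder set `[σ] ⊆ Φ_∞ = G^ℕ × G_y^ℕ`. -/
def Cyl (σ : Wd m n) : Set ((ℕ → Alph m n) × (ℕ → Fin m)) :=
  {x | (∀ i : ℕ, ∀ hi : i < σ.1.length, x.1 i = σ.1.get ⟨i, hi⟩) ∧
       (∀ i : ℕ, ∀ hi : i < σ.2.length, x.2 i = σ.2.get ⟨i, hi⟩)}

/-- the affine map `f_{ij}(x,y) = (a_{ij} x + c_{ij}, b_j y + d_j)`. -/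
def fmap (a : Alph m n → ℝ) (b : Fin m → ℝ) (c : Alph m n → ℝ) (d : Fin m → ℝ)
    (g : Alph m n) : ℝ × ℝ → ℝ × ℝ :=
  fun x => (a g * x.1 + c g, b g.1 * x.2 + d g.1)

/-- `A_{L,σ} = c_{i_1j_1} + Σ_{p≥2} (∏_{h<p} a_{i_hj_h}) c_{i_pj_p}`. -/
def xL (a c : Alph m n → ℝ) : List (Alph m n) → ℝ
  | [] => 0
  | g :: w => c g + a g * xL a c w

/-- `B_{L,σ} = d_{j_1} + Σ_{p≥2} (∏_{h<p} b_{j_h}) d_{j_p}`. -/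
def yL (b d : Fin m → ℝ) : List (Fin m) → ℝ
  | [] => 0
  | j :: τ => d j + b j * yL b d τ

/-- the approximate square `F_σ = [A_{L,σ}, A_{L,σ}+a_{σ_L}] × [B_{L,σ}, B_{L,σ}+b_{σ_y}]`. -/
def Fsq (a c : Alph m n → ℝ) (b d : Fin m → ℝ) (σ : Wd m n) : Set (ℝ × ℝ) :=
  Set.Icc (xL a c σ.1) (xL a c σ.1 + aP a σ.1) ×ˢ
    Set.Icc (yL b d (sy σ)) (yL b d (sy σ) + bP b (sy σ))

/-- the Euclidean distance on `ℝ²`. -/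
def eudist (x y : ℝ × ℝ) : ℝ := Real.sqrt ((x.1 - y.1) ^ 2 + (x.2 - y.2) ^ 2)

/-- the horizontal distance `d_h(S,T) = inf{|x-x'| : (x,y)∈S, (x',y')∈T}`. -/
def dH (S T : Set (ℝ × ℝ)) : ℝ := sInf {e | ∃ x ∈ S, ∃ y ∈ T, e = |x.1 - y.1|}

/-- the (Euclidean) diameter of a subset of `ℝ²`. -/
def euDiam (S : Set (ℝ × ℝ)) : ℝ := sSup {e | ∃ x ∈ S, ∃ y ∈ S, e = eudist x y}

/-- the `N`-th quantization error of order `r`. -/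
def qerr (μ : Measure (ℝ × ℝ)) (r : ℝ) (N : ℕ) : ℝ :=
  sInf {e : ℝ | ∃ α : Finset (ℝ × ℝ), ∃ hα : α.Nonempty, α.card ≤ N ∧
    e = (∫ x, α.inf' hα (fun y => eudist x y ^ r) ∂μ) ^ (1 / r)}

/-- the topological support of a measure on `ℝ²`. -/
def suppSet (μ : Measure (ℝ × ℝ)) : Set (ℝ × ℝ) :=
  {x | ∀ U : Set (ℝ × ℝ), IsOpen U → x ∈ U → μ U ≠ 0}

/-- the dyadic square `[k 2^{-N}, (k+1) 2^{-N}) × [k' 2^{-N}, (k'+1) 2^{-N})`. -/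
def Dy (N : ℕ) (k : ℤ × ℤ) : Set (ℝ × ℝ) :=
  Set.Ico ((k.1 : ℝ) * (2 : ℝ) ^ (-(N : ℤ))) (((k.1 : ℝ) + 1) * (2 : ℝ) ^ (-(N : ℤ))) ×ˢ
    Set.Ico ((k.2 : ℝ) * (2 : ℝ) ^ (-(N : ℤ))) (((k.2 : ℝ) + 1) * (2 : ℝ) ^ (-(N : ℤ)))

/-!
Inserting the block `(τ_0)_y = (j_0, j_0)` into a `y`-word multiplies its `b`-product by `b_{j_0}²`
wherever it goes. If `σ̄_y ⪯ ω̄_y`, then `σ_y` with the block inserted after `σ_L`, and the `y`-word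
of an ancestor `τ` of `ω` with the block inserted after `ω_L` (once `|τ_y| ≥ |ω_L|`), are both
prefixes of `ω̄_y`. Along prefixes of one word `b` decreases, so the window conditions
`b_{τ_y} < a_{τ_L} ≤ b_{(τ_y)^-}` compare their lengths. For `τ = ω` this gives
`q_{ω_y} ≤ q_{σ_y}`, whence `η̲_r < a_ζ^r` for `ω_L = σ_L ζ`, i.e. `|ζ| ≤ A_{5,r}`; and
`n > T_{1,r}` makes `|σ_R| > A_1 + A_{5,r} + 3`. Going up the ancestors of `ω` from level
`|σ_L|`, the `y`-length grows by at most `A_1` per step, while exceeding `|ω_L|` would need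
length at least `|σ_y| > |ω_L| + A_1` (at level `|σ_L|` it would force `E_r = E_r(σ) < η̲_r^n`).
So it never exceeds `|ω_L|`, contradicting `|ω_y| > |ω_L|`. A proper prefix `ω̄_y` of `σ̄_y` is
impossible since `a_{ω̄_L} ≤ a_{σ̄_L}`, and equality is the first case.
-/

section ListProduct

variable {α : Type*} {f : α → ℝ}

lemma prod_map_pos {w : List α} (h : ∀ x ∈ w, 0 < f x) : 0 < (w.map f).prod :=
  List.prod_pos (by simpa using h)

lemma prod_map_nonneg {w : List α} (h : ∀ x ∈ w, 0 ≤ f x) : 0 ≤ (w.map f).prod :=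
  List.prod_nonneg (by simpa using h)

lemma prod_map_le_one {w : List α} (h0 : ∀ x ∈ w, 0 ≤ f x) (h1 : ∀ x ∈ w, f x ≤ 1) :
    (w.map f).prod ≤ 1 := by
  simpa using List.prod_map_le_prod_map₀ f (fun _ => 1) h0 h1

lemma prod_map_le_pow_length {w : List α} {C : ℝ} (h0 : ∀ x ∈ w, 0 ≤ f x)
    (h : ∀ x ∈ w, f x ≤ C) : (w.map f).prod ≤ C ^ w.length := by
  simpa using List.prod_map_le_prod_map₀ f (fun _ => C) h0 h

lemma pow_length_le_prod_map {w : List α} {c : ℝ} (hc : 0 ≤ c) (h : ∀ x ∈ w, c ≤ f x) :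
    c ^ w.length ≤ (w.map f).prod := by
  simpa using List.prod_map_le_prod_map₀ (fun _ => c) f (fun _ _ => hc) h

lemma prod_map_le_of_prefix (h0 : ∀ x, 0 ≤ f x) (h1 : ∀ x, f x ≤ 1) {v w : List α}
    (h : v <+: w) : (w.map f).prod ≤ (v.map f).prod := by
  obtain ⟨t, rfl⟩ := h
  rw [List.map_append, List.prod_append]
  exact mul_le_of_le_one_right (prod_map_nonneg fun x _ => h0 x)
    (prod_map_le_one (fun x _ => h0 x) (fun x _ => h1 x))

lemma length_le_of_prefix_of_prod_lt (h0 : ∀ x, 0 ≤ f x) (h1 : ∀ x, f x ≤ 1)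
    {P Q V : List α} (hP : P <+: V) (hQ : Q <+: V)
    (h : (P.map f).prod < (Q.dropLast.map f).prod) : Q.length ≤ P.length := by
  by_contra! hlt
  have hPQ : P <+: Q.dropLast :=
    List.prefix_of_prefix_length_le hP ((List.dropLast_prefix Q).trans hQ)
      (by rw [List.length_dropLast]; omega)
  exact (prod_map_le_of_prefix h0 h1 hPQ).not_gt h

/-- For `0 ≤ f ≤ 1`: `P` is the shortest prefix of itself whose product drops below `x`.
`σ ∈ Ψ_l` says that `σ_y` is a window for `a_{σ_L}`. -/
def IsWindow (f : α → ℝ) (x : ℝ) (P : List α) : Prop :=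
  x ≤ (P.dropLast.map f).prod ∧ (P.map f).prod < x

lemma IsWindow.eq_of_prefix (h0 : ∀ x, 0 ≤ f x) (h1 : ∀ x, f x ≤ 1) {x : ℝ}
    {P Q V : List α} (hP : IsWindow f x P) (hQ : IsWindow f x Q) (hPV : P <+: V)
    (hQV : Q <+: V) : P = Q :=
  have hle := length_le_of_prefix_of_prod_lt h0 h1 hQV hPV (hQ.2.trans_le hP.1)
  (List.prefix_of_prefix_length_le hPV hQV hle).eq_of_length
    (hle.antisymm (length_le_of_prefix_of_prod_lt h0 h1 hPV hQV (hP.2.trans_le hQ.1)))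

lemma exists_isWindow_take (h0 : ∀ x, 0 ≤ f x) (h1 : ∀ x, f x ≤ 1) {V : List α} {x : ℝ}
    {k : ℕ} (hV : (V.map f).prod < x) (hk : x ≤ ((V.take k).map f).prod) :
    ∃ u, k < u ∧ u ≤ V.length ∧ IsWindow f x (V.take u) := by
  classical
  have hex : ∃ u, ((V.take u).map f).prod < x := ⟨V.length, by simpa using hV⟩
  set u := Nat.find hex
  have hu : ((V.take u).map f).prod < x := Nat.find_spec hex
  have huV : u ≤ V.length := Nat.find_min' hex (by simpa using hV)
  have hku : k < u := by
    by_contra! h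
    exact (hk.trans (prod_map_le_of_prefix h0 h1 (List.take_prefix_take_left h))).not_gt hu
  refine ⟨u, hku, huV, ?_, hu⟩
  have hdrop : (V.take u).dropLast = V.take (u - 1) := by
    rw [List.dropLast_eq_take, List.take_take, List.length_take]
    congr 1
    omega
  rw [hdrop]
  exact not_lt.mp (Nat.find_min hex (by omega))

def insertAt (k : ℕ) (B Y : List α) : List α := Y.take k ++ B ++ Y.drop k

lemma length_insertAt (k : ℕ) (B Y : List α) :
    (insertAt k B Y).length = Y.length + B.length := by
  simp only [insertAt, List.length_append, List.length_take, List.length_drop]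
  omega

lemma insertAt_append_of_length_eq {k : ℕ} (B : List α) {Q R : List α} (hk : Q.length = k) :
    insertAt k B (Q ++ R) = Q ++ B ++ R := by
  rw [insertAt, List.take_left' hk, List.drop_left' hk]

lemma prod_map_insertAt (k : ℕ) (B Y : List α) {M : Type*} [CommMonoid M] (g : α → M) :
    ((insertAt k B Y).map g).prod = (Y.map g).prod * (B.map g).prod := by
  conv_rhs => rw [← List.take_append_drop k Y]
  simp only [insertAt, List.map_append, List.prod_append]
  ac_rfl

lemma dropLast_insertAt {k : ℕ} (B : List α) {Y : List α} (hk : k < Y.length) :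
    (insertAt k B Y).dropLast = insertAt k B Y.dropLast := by
  have hne : Y.drop k ≠ [] := by simpa using hk
  have htake : Y.dropLast.take k = Y.take k := by
    rw [List.dropLast_eq_take, List.take_take, Nat.min_eq_left (by omega)]
  rw [insertAt, insertAt, List.dropLast_append_of_ne_nil hne, List.dropLast_drop_eq_drop_dropLast,
    htake]

lemma insertAt_prefix_insertAt {k : ℕ} (B : List α) {Y Z : List α} (h : Y <+: Z)
    (hk : k ≤ Y.length) : insertAt k B Y <+: insertAt k B Z := by
  obtain ⟨t, rfl⟩ := h
  refine ⟨t, ?_⟩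
  simp [insertAt, List.take_append_of_le_length hk, List.drop_append_of_le_length hk]

lemma IsWindow.insertAt {x : ℝ} {P : List α} (hP : IsWindow f x P) {k : ℕ} (hk : k < P.length)
    (B : List α) (hB : 0 < (B.map f).prod) :
    IsWindow f (x * (B.map f).prod) (insertAt k B P) := by
  rw [IsWindow, dropLast_insertAt B hk, prod_map_insertAt, prod_map_insertAt]
  exact ⟨mul_le_mul_of_nonneg_right hP.1 hB.le, mul_lt_mul_of_pos_right hP.2 hB⟩

end ListProduct

lemma aP_append (a : Alph m n → ℝ) (v w : List (Alph m n)) :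
    aP a (v ++ w) = aP a v * aP a w := by simp [aP]

lemma pP_append (p : Alph m n → ℝ) (v w : List (Alph m n)) :
    pP p (v ++ w) = pP p v * pP p w := by simp [pP]

lemma bP_append (b : Fin m → ℝ) (v w : List (Fin m)) :
    bP b (v ++ w) = bP b v * bP b w := by simp [bP]

lemma qP_append (p : Alph m n → ℝ) (v w : List (Fin m)) :
    qP p (v ++ w) = qP p v * qP p w := by simp [qP]

lemma length_sy (σ : Wd m n) : (sy σ).length = σ.1.length + σ.2.length := by simp [sy]

lemma Er_nil (a p : Alph m n → ℝ) (r : ℝ) : Er a p r ([], []) = 1 := by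
  simp [Er, pP, qP, aP]

lemma forall_apply_ciInf {ι : Type*} [Finite ι] [Nonempty ι] {f : ι → ℝ} {P : ℝ → Prop}
    (h : ∀ i, P (f i)) : P (⨅ i, f i) := by
  obtain ⟨i, hi⟩ := exists_eq_ciInf_of_finite (f := f)
  exact hi ▸ h i

lemma forall_apply_ciSup {ι : Type*} [Finite ι] [Nonempty ι] {f : ι → ℝ} {P : ℝ → Prop}
    (h : ∀ i, P (f i)) : P (⨆ i, f i) := by
  obtain ⟨i, hi⟩ := exists_eq_ciSup_of_finite (f := f)
  exact hi ▸ h i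

lemma aLo_le {a : Alph m n → ℝ} (g : Alph m n) : aLo a ≤ a g :=
  ciInf_le (Set.finite_range a).bddBelow g

lemma le_aHi {a : Alph m n → ℝ} (g : Alph m n) : a g ≤ aHi a :=
  le_ciSup (Set.finite_range a).bddAbove g

lemma bLo_le {b : Fin m → ℝ} (j : Fin m) : bLo b ≤ b j :=
  ciInf_le (Set.finite_range b).bddBelow j

lemma le_bHi {b : Fin m → ℝ} (j : Fin m) : b j ≤ bHi b :=
  le_ciSup (Set.finite_range b).bddAbove j

structure IsCarpetRatios (a : Alph m n → ℝ) (b : Fin m → ℝ) : Prop where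
  a_pos : ∀ g, 0 < a g
  a_lt_b : ∀ g, a g < b g.1
  b_pos : ∀ j, 0 < b j
  b_lt_one : ∀ j, b j < 1

namespace IsCarpetRatios

variable {a : Alph m n → ℝ} {b : Fin m → ℝ}

lemma a_lt_one (hS : IsCarpetRatios a b) (g : Alph m n) : a g < 1 :=
  (hS.a_lt_b g).trans (hS.b_lt_one g.1)

lemma aP_pos (hS : IsCarpetRatios a b) (w : List (Alph m n)) : 0 < aP a w :=
  prod_map_pos fun g _ => hS.a_pos g

lemma aP_le_of_prefix (hS : IsCarpetRatios a b) {v w : List (Alph m n)} (h : v <+: w) :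
    aP a w ≤ aP a v :=
  prod_map_le_of_prefix (fun g => (hS.a_pos g).le) (fun g => (hS.a_lt_one g).le) h

lemma aP_le_bP (hS : IsCarpetRatios a b) (w : List (Alph m n)) :
    aP a w ≤ bP b (w.map Sigma.fst) := by
  rw [aP, bP, List.map_map]
  exact List.prod_map_le_prod_map₀ _ _ (fun g _ => (hS.a_pos g).le) (fun g _ => (hS.a_lt_b g).le)

lemma bP_pos (hS : IsCarpetRatios a b) (τ : List (Fin m)) : 0 < bP b τ :=
  prod_map_pos fun j _ => hS.b_pos j

lemma a_le_A3_mul (hS : IsCarpetRatios a b) (g : Alph m n) : a g ≤ A3 a b * b g.1 := by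
  have h : a g / b g.1 ≤ A3 a b :=
    le_ciSup (Set.finite_range fun g : Alph m n => a g / b g.1).bddAbove g
  rwa [div_le_iff₀ (hS.b_pos g.1)] at h

lemma aLo_mem_Ioo (hS : IsCarpetRatios a b) [Nonempty (Alph m n)] : aLo a ∈ Set.Ioo 0 1 :=
  forall_apply_ciInf fun g => ⟨hS.a_pos g, hS.a_lt_one g⟩

lemma aHi_mem_Ioo (hS : IsCarpetRatios a b) [Nonempty (Alph m n)] : aHi a ∈ Set.Ioo 0 1 :=
  forall_apply_ciSup fun g => ⟨hS.a_pos g, hS.a_lt_one g⟩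

lemma bLo_mem_Ioo (hS : IsCarpetRatios a b) [Nonempty (Fin m)] : bLo b ∈ Set.Ioo 0 1 :=
  forall_apply_ciInf fun j => ⟨hS.b_pos j, hS.b_lt_one j⟩

lemma bHi_mem_Ioo (hS : IsCarpetRatios a b) [Nonempty (Fin m)] : bHi b ∈ Set.Ioo 0 1 :=
  forall_apply_ciSup fun j => ⟨hS.b_pos j, hS.b_lt_one j⟩

lemma A3_mem_Ioo (hS : IsCarpetRatios a b) [Nonempty (Alph m n)] : A3 a b ∈ Set.Ioo 0 1 :=
  forall_apply_ciSup fun g =>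
    ⟨div_pos (hS.a_pos g) (hS.b_pos g.1), (div_lt_one (hS.b_pos g.1)).2 (hS.a_lt_b g)⟩

lemma aP_le_aHi_pow (hS : IsCarpetRatios a b) (w : List (Alph m n)) :
    aP a w ≤ aHi a ^ w.length :=
  prod_map_le_pow_length (fun g _ => (hS.a_pos g).le) (fun g _ => le_aHi g)

lemma bP_le_bHi_pow (hS : IsCarpetRatios a b) (τ : List (Fin m)) : bP b τ ≤ bHi b ^ τ.length :=
  prod_map_le_pow_length (fun j _ => (hS.b_pos j).le) (fun j _ => le_bHi j)

lemma bLo_pow_le_bP (hS : IsCarpetRatios a b) [Nonempty (Fin m)] (τ : List (Fin m)) :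
    bLo b ^ τ.length ≤ bP b τ :=
  pow_length_le_prod_map hS.bLo_mem_Ioo.1.le (fun j _ => bLo_le j)

lemma aP_le_A3_pow_mul_bP (hS : IsCarpetRatios a b) (w : List (Alph m n)) :
    aP a w ≤ A3 a b ^ w.length * bP b (w.map Sigma.fst) := by
  calc aP a w ≤ (w.map fun g => A3 a b * b g.1).prod :=
        List.prod_map_le_prod_map₀ _ _ (fun g _ => (hS.a_pos g).le) (fun g _ => hS.a_le_A3_mul g)
    _ = A3 a b ^ w.length * bP b (w.map Sigma.fst) := by
        simp [List.prod_map_mul, bP, Function.comp_def]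

lemma A1_pos (hS : IsCarpetRatios a b) [Nonempty (Alph m n)] [Nonempty (Fin m)] : 0 < A1 a b := by
  have h : 0 < Real.log (aLo a) / Real.log (bHi b) :=
    div_pos_of_neg_of_neg (Real.log_neg hS.aLo_mem_Ioo.1 hS.aLo_mem_Ioo.2)
      (Real.log_neg hS.bHi_mem_Ioo.1 hS.bHi_mem_Ioo.2)
  have := Int.floor_nonneg.2 h.le
  rw [A1]
  omega

lemma lt_A1_of_aLo_le_pow (hS : IsCarpetRatios a b) [Nonempty (Alph m n)] [Nonempty (Fin m)] {ν : ℕ}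
    (h : aLo a ≤ bHi b ^ ν) : (ν : ℤ) < A1 a b := by
  have hlog : Real.log (aLo a) ≤ ν * Real.log (bHi b) := by
    rw [← Real.log_pow]
    exact Real.log_le_log hS.aLo_mem_Ioo.1 h
  have : (ν : ℝ) ≤ Real.log (aLo a) / Real.log (bHi b) :=
    (le_div_iff_of_neg (Real.log_neg hS.bHi_mem_Ioo.1 hS.bHi_mem_Ioo.2)).2 hlog
  rw [A1, Int.lt_add_one_iff, Int.le_floor]
  exact_mod_cast this

lemma A4_pos (hS : IsCarpetRatios a b) [Nonempty (Alph m n)] [Nonempty (Fin m)] : 0 < A4 a b :=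
  div_pos_of_neg_of_neg (Real.log_neg hS.A3_mem_Ioo.1 hS.A3_mem_Ioo.2)
    (Real.log_neg hS.bLo_mem_Ioo.1 hS.bLo_mem_Ioo.2)

end IsCarpetRatios

section Weights

variable {a : Alph m n → ℝ} {b : Fin m → ℝ} {p : Alph m n → ℝ} {r : ℝ}

lemma p_le_qf (hp : ∀ g, 0 < p g) (g : Alph m n) : p g ≤ qf p g.1 :=
  Finset.single_le_sum (f := fun i => p ⟨g.1, i⟩) (fun _ _ => (hp _).le) (Finset.mem_univ g.2)

lemma qf_pos (hn : ∀ j, 1 ≤ n j) (hp : ∀ g, 0 < p g) (j : Fin m) : 0 < qf p j :=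
  (hp ⟨j, ⟨0, hn j⟩⟩).trans_le (p_le_qf hp _)

lemma qf_le_one (hp : ∀ g, 0 < p g) (hp1 : ∑ g : Alph m n, p g = 1) (j : Fin m) :
    qf p j ≤ 1 := by
  rw [← hp1, Fintype.sum_sigma]
  exact Finset.single_le_sum (f := qf p)
    (fun j _ => Finset.sum_nonneg fun i _ => (hp _).le) (Finset.mem_univ j)

lemma pP_pos (hp : ∀ g, 0 < p g) (w : List (Alph m n)) : 0 < pP p w :=
  prod_map_pos fun g _ => hp g

lemma qP_pos (hn : ∀ j, 1 ≤ n j) (hp : ∀ g, 0 < p g) (τ : List (Fin m)) : 0 < qP p τ :=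
  prod_map_pos fun j _ => qf_pos hn hp j

lemma qf_nonneg (hp : ∀ g, 0 < p g) (j : Fin m) : 0 ≤ qf p j :=
  Finset.sum_nonneg fun _ _ => (hp _).le

lemma qP_nonneg (hp : ∀ g, 0 < p g) (τ : List (Fin m)) : 0 ≤ qP p τ :=
  prod_map_nonneg fun j _ => qf_nonneg hp j

lemma qP_le_one (hp : ∀ g, 0 < p g) (hp1 : ∑ g : Alph m n, p g = 1) (τ : List (Fin m)) :
    qP p τ ≤ 1 :=
  prod_map_le_one (fun j _ => qf_nonneg hp j) fun j _ => qf_le_one hp hp1 j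

lemma pP_le_qP (hp : ∀ g, 0 < p g) (w : List (Alph m n)) : pP p w ≤ qP p (w.map Sigma.fst) := by
  rw [pP, qP, List.map_map]
  exact List.prod_map_le_prod_map₀ _ _ (fun g _ => (hp g).le) (fun g _ => p_le_qf hp g)

lemma pLo_le (g : Alph m n) : pLo p ≤ p g := ciInf_le (Set.finite_range p).bddBelow g

lemma qLo_le (j : Fin m) : qLo p ≤ qf p j := ciInf_le (Set.finite_range (qf p)).bddBelow j

lemma qLo_pow_le_qP (hn : ∀ j, 1 ≤ n j) (hp : ∀ g, 0 < p g) [Nonempty (Fin m)]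
    (τ : List (Fin m)) : qLo p ^ τ.length ≤ qP p τ :=
  pow_length_le_prod_map (forall_apply_ciInf fun j => qf_pos hn hp j).le fun j _ => qLo_le j

lemma qLo_mem_Ioc (hn : ∀ j, 1 ≤ n j) (hp : ∀ g, 0 < p g) (hp1 : ∑ g : Alph m n, p g = 1)
    [Nonempty (Fin m)] : qLo p ∈ Set.Ioc 0 1 :=
  forall_apply_ciInf fun j => ⟨qf_pos hn hp j, qf_le_one hp hp1 j⟩

variable [Nonempty (Alph m n)] [Nonempty (Fin m)]

lemma etaLo_pos (hS : IsCarpetRatios a b) (hn : ∀ j, 1 ≤ n j) (hp : ∀ g, 0 < p g) :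
    0 < etaLo a b p r := by
  have := forall_apply_ciInf (f := p) hp
  have := zpow_pos (forall_apply_ciInf fun j => qf_pos hn hp j) (A1 a b)
  have := Real.rpow_pos_of_pos hS.aLo_mem_Ioo.1 r
  unfold etaLo pLo qLo
  positivity

lemma etaLo_lt_one (hS : IsCarpetRatios a b) (hn : ∀ j, 1 ≤ n j) (hp : ∀ g, 0 < p g)
    (hp1 : ∑ g : Alph m n, p g = 1) (hr : 0 < r) : etaLo a b p r < 1 := by
  have hq := qLo_mem_Ioc hn hp hp1
  have hpq : pLo p * qLo p ^ A1 a b ≤ 1 :=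
    mul_le_one₀
      (forall_apply_ciInf (P := (· ≤ 1)) fun g => (p_le_qf hp g).trans (qf_le_one hp hp1 _))
      (zpow_pos hq.1 _).le (zpow_le_one₀ hq.1 hq.2 hS.A1_pos.le)
  calc etaLo a b p r ≤ aLo a ^ r :=
        mul_le_of_le_one_left (Real.rpow_pos_of_pos hS.aLo_mem_Ioo.1 r).le hpq
    _ < 1 := Real.rpow_lt_one hS.aLo_mem_Ioo.1.le hS.aLo_mem_Ioo.2 hr

lemma etaLo_le_of_length_le (hS : IsCarpetRatios a b) (hn : ∀ j, 1 ≤ n j) (hp : ∀ g, 0 < p g)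
    (hp1 : ∑ g : Alph m n, p g = 1) (hr : 0 < r) {T : List (Fin m)}
    (hT : (T.length : ℤ) ≤ A1 a b) (g : Alph m n) :
    etaLo a b p r ≤ p g * qP p T * a g ^ r := by
  have hq := qLo_mem_Ioc hn hp hp1
  have hqT : qLo p ^ A1 a b ≤ qP p T :=
    calc qLo p ^ A1 a b ≤ qLo p ^ (T.length : ℤ) := zpow_le_zpow_right_of_le_one₀ hq.1 hq.2 hT
      _ ≤ qP p T := by rw [zpow_natCast]; exact qLo_pow_le_qP hn hp T
  exact mul_le_mul (mul_le_mul (pLo_le g) hqT (zpow_pos hq.1 _).le (hp g).le)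
    (Real.rpow_le_rpow hS.aLo_mem_Ioo.1.le (aLo_le g) hr.le)
    (Real.rpow_pos_of_pos hS.aLo_mem_Ioo.1 r).le (mul_pos (hp g) (qP_pos hn hp T)).le

end Weights

section Parents

variable {a : Alph m n → ℝ} {b : Fin m → ℝ} {p : Alph m n → ℝ} {r : ℝ}

lemma Er_nonneg (hS : IsCarpetRatios a b) (hp : ∀ g, 0 < p g) (σ : Wd m n) :
    0 ≤ Er a p r σ :=
  mul_nonneg (mul_nonneg (pP_pos hp _).le (qP_nonneg hp _)) (Real.rpow_nonneg (hS.aP_pos _).le r)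

lemma Er_mul_qf_eq (hS : IsCarpetRatios a b) {σ ρ : Wd m n} {g : Alph m n}
    {T : List (Fin m)} (hσ1 : σ.1 = ρ.1 ++ [g]) (hsy : sy σ = sy ρ ++ T) :
    Er a p r σ * qf p g.1 = Er a p r ρ * (p g * a g ^ r * qP p T) := by
  have hR : [g.1] ++ σ.2 = ρ.2 ++ T := by
    rw [sy, sy, hσ1, List.map_append, List.append_assoc, List.append_assoc] at hsy
    exact List.append_cancel_left hsy
  have hq : qf p g.1 * qP p σ.2 = qP p ρ.2 * qP p T := by
    simpa [qP_append, qP] using congrArg (qP p) hR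
  have hpg : pP p [g] = p g := by simp [pP]
  have hag : aP a [g] = a g := by simp [aP]
  rw [Er, Er, hσ1, pP_append, aP_append, hpg, hag,
    Real.mul_rpow (hS.aP_pos _).le (hS.a_pos g).le]
  linear_combination (pP p ρ.1 * p g * aP a ρ.1 ^ r * a g ^ r) * hq

/-- The extra letters `T` of `σ_y` beyond its parent's cannot number more than `A_1`: otherwise
`b_{T^-} ≤ b̄^{|T|-1} < a̲`, against `a_{σ_L} ≤ b_{(σ_y)^-}`. -/
lemma length_le_A1_of_snoc (hS : IsCarpetRatios a b) [Nonempty (Alph m n)] [Nonempty (Fin m)]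
    {σ ρ : Wd m n} {g : Alph m n} {T : List (Fin m)}
    (hσ : aP a σ.1 ≤ bP b (sy σ).dropLast) (hσ1 : σ.1 = ρ.1 ++ [g])
    (hsy : sy σ = sy ρ ++ T) (hρ : bP b (sy ρ) ≤ aP a ρ.1) : (T.length : ℤ) ≤ A1 a b := by
  rcases eq_or_ne T [] with rfl | hT
  · simpa using hS.A1_pos.le
  have h1 : aP a ρ.1 * aLo a ≤ aP a ρ.1 * bP b T.dropLast :=
    calc aP a ρ.1 * aLo a ≤ aP a σ.1 := by
          rw [hσ1, aP_append]
          exact mul_le_mul_of_nonneg_left (by simpa [aP] using aLo_le g) (hS.aP_pos _).le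
      _ ≤ bP b (sy σ).dropLast := hσ
      _ = bP b (sy ρ) * bP b T.dropLast := by
          rw [hsy, List.dropLast_append_of_ne_nil hT, bP_append]
      _ ≤ aP a ρ.1 * bP b T.dropLast := mul_le_mul_of_nonneg_right hρ (hS.bP_pos _).le
  have h2 : aLo a ≤ bHi b ^ (T.length - 1) := by
    simpa using (le_of_mul_le_mul_left h1 (hS.aP_pos _)).trans (hS.bP_le_bHi_pow T.dropLast)
  have := hS.lt_A1_of_aLo_le_pow h2
  have := List.length_pos_iff.2 hT
  omega

lemma Er_le_of_snoc (hS : IsCarpetRatios a b) (hp : ∀ g, 0 < p g)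
    (hp1 : ∑ g : Alph m n, p g = 1) (hr : 0 < r) {σ ρ : Wd m n} {g : Alph m n}
    {T : List (Fin m)} (hσ1 : σ.1 = ρ.1 ++ [g]) (hsy : sy σ = sy ρ ++ T) :
    Er a p r σ ≤ Er a p r ρ := by
  have hqf : 0 < qf p g.1 := (hp g).trans_le (p_le_qf hp g)
  have hrest : p g * a g ^ r * qP p T ≤ qf p g.1 :=
    calc p g * a g ^ r * qP p T ≤ p g * a g ^ r :=
          mul_le_of_le_one_right (mul_pos (hp g) (Real.rpow_pos_of_pos (hS.a_pos g) r)).le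
            (qP_le_one hp hp1 T)
      _ ≤ p g := mul_le_of_le_one_right (hp g).le
          (Real.rpow_le_one (hS.a_pos g).le (hS.a_lt_one g).le hr.le)
      _ ≤ qf p g.1 := p_le_qf hp g
  refine le_of_mul_le_mul_right ?_ hqf
  rw [Er_mul_qf_eq hS hσ1 hsy]
  exact mul_le_mul_of_nonneg_left hrest (Er_nonneg hS hp ρ)

lemma etaLo_mul_Er_le_of_snoc (hS : IsCarpetRatios a b) (hn : ∀ j, 1 ≤ n j)
    (hp : ∀ g, 0 < p g) (hp1 : ∑ g : Alph m n, p g = 1) (hr : 0 < r)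
    [Nonempty (Alph m n)] [Nonempty (Fin m)] {σ ρ : Wd m n} {g : Alph m n}
    {T : List (Fin m)} (hσ : aP a σ.1 ≤ bP b (sy σ).dropLast) (hσ1 : σ.1 = ρ.1 ++ [g])
    (hsy : sy σ = sy ρ ++ T) (hρ : bP b (sy ρ) ≤ aP a ρ.1) :
    etaLo a b p r * Er a p r ρ ≤ Er a p r σ := by
  have hqf : 0 < qf p g.1 := (hp g).trans_le (p_le_qf hp g)
  have hT := length_le_A1_of_snoc hS hσ hσ1 hsy hρ
  have heta : etaLo a b p r * qf p g.1 ≤ p g * a g ^ r * qP p T :=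
    calc etaLo a b p r * qf p g.1 ≤ etaLo a b p r :=
          mul_le_of_le_one_right (etaLo_pos hS hn hp).le (qf_le_one hp hp1 _)
      _ ≤ p g * qP p T * a g ^ r := etaLo_le_of_length_le hS hn hp hp1 hr hT g
      _ = p g * a g ^ r * qP p T := by ring
  refine le_of_mul_le_mul_right ?_ hqf
  calc etaLo a b p r * Er a p r ρ * qf p g.1 = Er a p r ρ * (etaLo a b p r * qf p g.1) := by ring
    _ ≤ Er a p r ρ * (p g * a g ^ r * qP p T) := mul_le_mul_of_nonneg_left heta (Er_nonneg hS hp ρ)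
    _ = Er a p r σ * qf p g.1 := (Er_mul_qf_eq hS hσ1 hsy).symm

lemma IsFlat.exists_snoc {σ ρ : Wd m n} (h : IsFlat a b σ ρ) :
    ∃ g T, σ.1 = ρ.1 ++ [g] ∧ sy σ = sy ρ ++ T ∧ bP b (sy ρ) ≤ aP a ρ.1 := by
  rcases h with ⟨h1, rfl⟩ | ⟨h2, hρ, hρ1, T, hT⟩
  · obtain ⟨g, hg⟩ := List.length_eq_one_iff.1 h1
    exact ⟨g, sy σ, hg, by simp [sy], by simp [sy, bP, aP]⟩
  · have hne : σ.1 ≠ [] := List.ne_nil_of_length_pos (by omega)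
    exact ⟨σ.1.getLast hne, T, by rw [hρ1, List.dropLast_append_getLast], hT.symm, hρ.2.2.2.le⟩

lemma IsFlat.Er_le (hS : IsCarpetRatios a b) (hp : ∀ g, 0 < p g)
    (hp1 : ∑ g : Alph m n, p g = 1) (hr : 0 < r) {σ ρ : Wd m n} (h : IsFlat a b σ ρ) :
    Er a p r σ ≤ Er a p r ρ := by
  obtain ⟨g, T, hσ1, hsy, -⟩ := h.exists_snoc
  exact Er_le_of_snoc hS hp hp1 hr hσ1 hsy

lemma IsFlat.etaLo_mul_Er_le (hS : IsCarpetRatios a b) (hn : ∀ j, 1 ≤ n j)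
    (hp : ∀ g, 0 < p g) (hp1 : ∑ g : Alph m n, p g = 1) (hr : 0 < r)
    [Nonempty (Alph m n)] [Nonempty (Fin m)] {σ ρ : Wd m n} {l : ℕ} (hσ : σ ∈ Psi a b l)
    (h : IsFlat a b σ ρ) : etaLo a b p r * Er a p r ρ ≤ Er a p r σ := by
  obtain ⟨g, T, hσ1, hsy, hρ⟩ := h.exists_snoc
  exact etaLo_mul_Er_le_of_snoc hS hn hp hp1 hr hσ.2.2.1 hσ1 hsy hρ

lemma IsFlat.length_sy_le (hS : IsCarpetRatios a b) [Nonempty (Alph m n)] [Nonempty (Fin m)]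
    {σ ρ : Wd m n} {l : ℕ} (hσ : σ ∈ Psi a b l) (h : IsFlat a b σ ρ) :
    ((sy σ).length : ℤ) ≤ (sy ρ).length + A1 a b := by
  obtain ⟨g, T, hσ1, hsy, hρ⟩ := h.exists_snoc
  have := length_le_A1_of_snoc hS hσ.2.2.1 hσ1 hsy hρ
  rw [hsy, List.length_append]
  push_cast
  omega

/-- The parent's `y`-word is the window of `σ_y` for the threshold `a_{(σ_L)^-}`. -/
lemma exists_isFlat (hS : IsCarpetRatios a b) {σ : Wd m n} {l : ℕ} (hσ : σ ∈ Psi a b l)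
    (hl : 1 ≤ l) : ∃ ρ, IsFlat a b σ ρ := by
  obtain ⟨hlen, -, -, hlt⟩ := hσ
  rcases hl.eq_or_lt with rfl | hl2
  · exact ⟨([], []), Or.inl ⟨hlen, rfl⟩⟩
  set w := σ.1.dropLast with hw
  have hwlen : w.length = l - 1 := by simp [w, hlen]
  have hwy : (sy σ).take (l - 1) = w.map Sigma.fst := by
    rw [sy, List.take_append_of_le_length (by simp; omega), ← List.map_take, hw,
      List.dropLast_eq_take, hlen]
  have hb0 : ∀ j, 0 ≤ b j := fun j => (hS.b_pos j).le
  have hb1 : ∀ j, b j ≤ 1 := fun j => (hS.b_lt_one j).le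
  obtain ⟨u, hlu, huσ, hwin⟩ := exists_isWindow_take hb0 hb1 (x := aP a w) (k := l - 1)
    (hlt.trans_le (hS.aP_le_of_prefix (List.dropLast_prefix σ.1)))
    (by rw [hwy]; exact hS.aP_le_bP w)
  have hsyρ : sy (w, ((sy σ).take u).drop (l - 1)) = (sy σ).take u := by
    have : (sy σ).take (l - 1) = ((sy σ).take u).take (l - 1) := by
      rw [List.take_take, Nat.min_eq_left hlu.le]
    show w.map Sigma.fst ++ _ = _
    rw [← hwy, this, List.take_append_drop]
  refine ⟨(w, ((sy σ).take u).drop (l - 1)), Or.inr ⟨by omega, ?_, rfl, ?_⟩⟩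
  · refine ⟨by rw [hwlen, hlen], ?_, ?_⟩
    · simp only [List.length_drop, List.length_take]
      omega
    · show IsWindow b (aP a w) _
      rwa [hsyρ]
  · rw [hsyρ]
    exact List.take_prefix u _

lemma etaLo_pow_le_Er (hS : IsCarpetRatios a b) (hn : ∀ j, 1 ≤ n j) (hp : ∀ g, 0 < p g)
    (hp1 : ∑ g : Alph m n, p g = 1) (hr : 0 < r) [Nonempty (Alph m n)] [Nonempty (Fin m)] :
    ∀ {l : ℕ} {σ : Wd m n}, σ ∈ Psi a b l → 1 ≤ l → etaLo a b p r ^ l ≤ Er a p r σ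
  | l + 1, σ, hσ, _ => by
    obtain ⟨ρ, hρ⟩ := exists_isFlat hS hσ (by omega)
    have hρE : etaLo a b p r ^ l ≤ Er a p r ρ := by
      rcases hρ with ⟨h1, rfl⟩ | ⟨h2, hρΨ, -⟩
      · obtain rfl : l = 0 := by rw [hσ.1] at h1; omega
        simp [Er_nil]
      · rw [hσ.1] at h2 hρΨ
        exact etaLo_pow_le_Er hS hn hp hp1 hr hρΨ (by omega)
    calc etaLo a b p r ^ (l + 1) = etaLo a b p r * etaLo a b p r ^ l := pow_succ' _ _
      _ ≤ etaLo a b p r * Er a p r ρ :=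
          mul_le_mul_of_nonneg_left hρE (etaLo_pos hS hn hp).le
      _ ≤ Er a p r σ := hρ.etaLo_mul_Er_le hS hn hp hp1 hr hσ

end Parents

section Comparison

variable {a : Alph m n → ℝ} {b : Fin m → ℝ} {p : Alph m n → ℝ} {r : ℝ}

lemma mul_A4_lt_length_snd (hS : IsCarpetRatios a b) [Nonempty (Fin m)] {σ : Wd m n} {l : ℕ}
    (hσ : σ ∈ Psi a b l) : (l : ℝ) * A4 a b < σ.2.length := by
  have hb : bP b σ.2 < A3 a b ^ l := by
    have h := hσ.2.2.2.trans_le (hS.aP_le_A3_pow_mul_bP σ.1)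
    rw [sy, bP_append, hσ.1, mul_comm] at h
    exact lt_of_mul_lt_mul_right h (hS.bP_pos _).le
  have hlog : (σ.2.length : ℝ) * Real.log (bLo b) < l * Real.log (A3 a b) := by
    rw [← Real.log_pow, ← Real.log_pow]
    exact Real.log_lt_log (pow_pos hS.bLo_mem_Ioo.1 _) ((hS.bLo_pow_le_bP σ.2).trans_lt hb)
  rwa [A4, mul_div_assoc', div_lt_iff_of_neg (Real.log_neg hS.bLo_mem_Ioo.1 hS.bLo_mem_Ioo.2)]

lemma lt_mul_A4_of_T1_lt (hS : IsCarpetRatios a b) [Nonempty (Alph m n)] [Nonempty (Fin m)]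
    {N : ℕ} (hN : T1 a b p r < N) :
    ((A1 a b + A5 a b p r + 3 : ℤ) : ℝ) < N * A4 a b := by
  have h : ((A1 a b + A5 a b p r + 3 : ℤ) : ℝ) / A4 a b < T1 a b p r + 1 :=
    Int.lt_floor_add_one _
  have hN' : ((T1 a b p r : ℤ) : ℝ) + 1 ≤ N := by exact_mod_cast hN
  exact (div_lt_iff₀ hS.A4_pos).1 (h.trans_le hN')

lemma length_le_A5 (hS : IsCarpetRatios a b) (hn : ∀ j, 1 ≤ n j) (hp : ∀ g, 0 < p g)
    (hp1 : ∑ g : Alph m n, p g = 1) (hr : 0 < r) [Nonempty (Alph m n)] [Nonempty (Fin m)]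
    {ζ : List (Alph m n)} (h : etaLo a b p r < aP a ζ ^ r) : (ζ.length : ℤ) ≤ A5 a b p r := by
  have hā := hS.aHi_mem_Ioo
  have hη := etaLo_pos (r := r) hS hn hp
  have hq := qLo_mem_Ioc hn hp hp1
  have hneg : r * Real.log (aHi a) < 0 := mul_neg_of_pos_of_neg hr (Real.log_neg hā.1 hā.2)
  have hlog : Real.log (qLo p ^ 2 * etaLo a b p r) < ζ.length * (r * Real.log (aHi a)) :=
    calc Real.log (qLo p ^ 2 * etaLo a b p r) ≤ Real.log (etaLo a b p r) :=
          Real.log_le_log (by have := hq.1; positivity)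
            (mul_le_of_le_one_left hη.le (pow_le_one₀ hq.1.le hq.2))
      _ < Real.log (aP a ζ ^ r) := Real.log_lt_log hη h
      _ = r * Real.log (aP a ζ) := Real.log_rpow (hS.aP_pos ζ) r
      _ ≤ r * Real.log (aHi a ^ ζ.length) :=
          mul_le_mul_of_nonneg_left (Real.log_le_log (hS.aP_pos ζ) (hS.aP_le_aHi_pow ζ)) hr.le
      _ = ζ.length * (r * Real.log (aHi a)) := by rw [Real.log_pow]; ring
  rw [A5, Int.le_floor]
  exact_mod_cast (le_div_iff_of_neg hneg).2 hlog.le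

lemma A1_add_A5_add_three_lt_length_snd (hS : IsCarpetRatios a b) (hn : ∀ j, 1 ≤ n j)
    (hp : ∀ g, 0 < p g) (hp1 : ∑ g : Alph m n, p g = 1) (hr : 0 < r)
    [Nonempty (Alph m n)] [Nonempty (Fin m)] {N : ℕ} (hN : T1 a b p r < N) {σ : Wd m n}
    {l : ℕ} (hσ : σ ∈ Psi a b l) (hl : 1 ≤ l) (hσE : Er a p r σ < etaLo a b p r ^ N) :
    A1 a b + A5 a b p r + 3 < σ.2.length := by
  have hlN : N < l := (pow_lt_pow_iff_right_of_lt_one₀ (etaLo_pos hS hn hp)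
    (etaLo_lt_one hS hn hp hp1 hr)).1 ((etaLo_pow_le_Er hS hn hp hp1 hr hσ hl).trans_lt hσE)
  have : (N : ℝ) * A4 a b ≤ l * A4 a b := by gcongr; exact hS.A4_pos.le
  exact_mod_cast ((lt_mul_A4_of_T1_lt hS hN).trans_le this).trans (mul_A4_lt_length_snd hS hσ)

lemma Er_le_of_qP_sy_le (hS : IsCarpetRatios a b) (hn : ∀ j, 1 ≤ n j) (hp : ∀ g, 0 < p g)
    {σ ω : Wd m n} {ζ : List (Alph m n)} (hζ : σ.1 ++ ζ = ω.1)
    (hq : qP p (sy ω) ≤ qP p (sy σ)) : Er a p r ω ≤ aP a ζ ^ r * Er a p r σ := by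
  have hq' : qP p (ζ.map Sigma.fst) * qP p ω.2 ≤ qP p σ.2 := by
    rw [sy, sy, ← hζ, List.map_append, qP_append, qP_append, qP_append, mul_assoc] at hq
    exact le_of_mul_le_mul_left hq (qP_pos hn hp _)
  have hc : 0 ≤ pP p σ.1 * aP a σ.1 ^ r * aP a ζ ^ r :=
    mul_nonneg (mul_nonneg (pP_pos hp _).le (Real.rpow_nonneg (hS.aP_pos _).le r))
      (Real.rpow_nonneg (hS.aP_pos _).le r)
  rw [Er, Er, ← hζ, pP_append, aP_append, Real.mul_rpow (hS.aP_pos _).le (hS.aP_pos _).le]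
  calc pP p σ.1 * pP p ζ * qP p ω.2 * (aP a σ.1 ^ r * aP a ζ ^ r)
      = pP p σ.1 * aP a σ.1 ^ r * aP a ζ ^ r * (pP p ζ * qP p ω.2) := by ring
    _ ≤ pP p σ.1 * aP a σ.1 ^ r * aP a ζ ^ r * (qP p (ζ.map Sigma.fst) * qP p ω.2) :=
        mul_le_mul_of_nonneg_left
          (mul_le_mul_of_nonneg_right (pP_le_qP hp ζ) (qP_nonneg hp _)) hc
    _ ≤ pP p σ.1 * aP a σ.1 ^ r * aP a ζ ^ r * qP p σ.2 := mul_le_mul_of_nonneg_left hq' hc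
    _ = aP a ζ ^ r * (pP p σ.1 * qP p σ.2 * aP a σ.1 ^ r) := by ring

lemma sy_eq_of_sy_prefix (hS : IsCarpetRatios a b) {τ τ' : Wd m n} {k k' : ℕ}
    (hτ : τ ∈ Psi a b k) (hτ' : τ' ∈ Psi a b k') (ha : aP a τ'.1 ≤ aP a τ.1)
    (h : sy τ' <+: sy τ) : sy τ' = sy τ :=
  h.eq_of_length <| h.length_le.antisymm <|
    length_le_of_prefix_of_prod_lt (fun j => (hS.b_pos j).le) (fun j => (hS.b_lt_one j).le) h
      (List.prefix_refl _) (hτ'.2.2.2.trans_le (ha.trans hτ.2.2.1))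

lemma BarExt.insertAt_sy_prefix {j0 : Fin m} {h : 2 ≤ n j0} {σ σb : Wd m n}
    (hb : BarExt a b j0 h σ σb) :
    insertAt σ.1.length ((tau0 j0 h).map Sigma.fst) (sy σ) <+: sy σb := by
  obtain ⟨-, h1, h2⟩ := hb
  rw [sy, insertAt_append_of_length_eq _ (List.length_map _), sy, h1, List.map_append,
    List.append_assoc, List.append_assoc]
  exact (List.prefix_append_right_inj _).2 ((List.prefix_append_right_inj _).2 h2)

variable {B V : List (Fin m)} {σ ω : Wd m n} {l : ℕ}

lemma insertAt_sy_prefix_of_aP_le (hS : IsCarpetRatios a b) (hB : 0 < bP b B)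
    (hσ : σ ∈ Psi a b l) (hXσ : insertAt σ.1.length B (sy σ) <+: V)
    (hXω : insertAt ω.1.length B (sy ω) <+: V) {τ : Wd m n} (hτ : bP b (sy τ) < aP a τ.1)
    (haτ : aP a τ.1 ≤ aP a σ.1) (hτω : sy τ <+: sy ω) (hLτ : ω.1.length ≤ (sy τ).length) :
    insertAt σ.1.length B (sy σ) <+: insertAt ω.1.length B (sy τ) := by
  have hXτ := (insertAt_prefix_insertAt B hτω hLτ).trans hXω
  have hk : σ.1.length < (sy σ).length := by rw [length_sy]; have := hσ.2.1; omega
  have hwin := IsWindow.insertAt (f := b) hσ.2.2 hk B hB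
  refine List.prefix_of_prefix_length_le hXσ hXτ (length_le_of_prefix_of_prod_lt
    (fun j => (hS.b_pos j).le) (fun j => (hS.b_lt_one j).le) hXτ hXσ ?_)
  calc ((insertAt ω.1.length B (sy τ)).map b).prod = bP b (sy τ) * bP b B :=
        prod_map_insertAt _ _ _ _
    _ < aP a σ.1 * bP b B := mul_lt_mul_of_pos_right (hτ.trans_le haτ) hB
    _ ≤ _ := hwin.1

lemma length_sy_le_of_aP_le (hS : IsCarpetRatios a b) (hB : 0 < bP b B)
    (hσ : σ ∈ Psi a b l) (hXσ : insertAt σ.1.length B (sy σ) <+: V)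
    (hXω : insertAt ω.1.length B (sy ω) <+: V) {τ : Wd m n} (hτ : bP b (sy τ) < aP a τ.1)
    (haτ : aP a τ.1 ≤ aP a σ.1) (hτω : sy τ <+: sy ω) (hLτ : ω.1.length ≤ (sy τ).length) :
    (sy σ).length ≤ (sy τ).length := by
  simpa [length_insertAt] using
    (insertAt_sy_prefix_of_aP_le hS hB hσ hXσ hXω hτ haτ hτω hLτ).length_le

/-- Both words with `B` inserted are windows for `a_{σ_L} b_B` inside `V`, hence equal, so the two
`y`-words have the same letters. -/
lemma Er_eq_of_fst_eq (hS : IsCarpetRatios a b) (hn : ∀ j, 1 ≤ n j) (hp : ∀ g, 0 < p g)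
    (hB : 0 < bP b B) (hσ : σ ∈ Psi a b l) (hXσ : insertAt σ.1.length B (sy σ) <+: V)
    (hXω : insertAt ω.1.length B (sy ω) <+: V) {τ : Wd m n} {t : ℕ} (hτ : τ ∈ Psi a b t)
    (hτσ : τ.1 = σ.1) (hτω : sy τ <+: sy ω) (hLτ : ω.1.length < (sy τ).length) :
    Er a p r τ = Er a p r σ := by
  have hXτ := (insertAt_prefix_insertAt B hτω hLτ.le).trans hXω
  have hk : σ.1.length < (sy σ).length := by rw [length_sy]; have := hσ.2.1; omega
  have hwσ := IsWindow.insertAt (f := b) hσ.2.2 hk B hB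
  have hwτ := IsWindow.insertAt (f := b) hτ.2.2 hLτ B hB
  rw [hτσ] at hwτ
  have heq := hwτ.eq_of_prefix (fun j => (hS.b_pos j).le) (fun j => (hS.b_lt_one j).le) hwσ
    hXτ hXσ
  have hq : qP p (sy τ) = qP p (sy σ) := by
    have := congrArg (fun Y => (Y.map (qf p)).prod) heq
    simp only [prod_map_insertAt] at this
    exact mul_right_cancel₀ (qP_pos hn hp B).ne' this
  rw [sy, sy, qP_append, qP_append, hτσ] at hq
  rw [Er, Er, hτσ, mul_left_cancel₀ (qP_pos hn hp _).ne' hq]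

lemma Er_le_of_insertAt_prefix (hS : IsCarpetRatios a b) (hn : ∀ j, 1 ≤ n j)
    (hp : ∀ g, 0 < p g) (hp1 : ∑ g : Alph m n, p g = 1) (hB : 0 < bP b B) (hσ : σ ∈ Psi a b l)
    (hXσ : insertAt σ.1.length B (sy σ) <+: V) (hXω : insertAt ω.1.length B (sy ω) <+: V)
    {L : ℕ} (hω : ω ∈ Psi a b L) {ζ : List (Alph m n)} (hζ : σ.1 ++ ζ = ω.1) :
    Er a p r ω ≤ aP a ζ ^ r * Er a p r σ := by
  obtain ⟨R, hR⟩ := insertAt_sy_prefix_of_aP_le hS hB hσ hXσ hXω hω.2.2.2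
    (hS.aP_le_of_prefix ⟨ζ, hζ⟩) (List.prefix_refl _) (by rw [length_sy]; omega)
  refine Er_le_of_qP_sy_le hS hn hp hζ (le_of_mul_le_mul_right ?_ (qP_pos hn hp B))
  have := congrArg (fun Y => (Y.map (qf p)).prod) hR
  simp only [List.map_append, List.prod_append, prod_map_insertAt] at this
  rw [← qP, ← qP, ← qP, ← qP] at this
  rw [← this]
  exact mul_le_of_le_one_right (mul_nonneg (qP_nonneg hp _) (qP_nonneg hp _)) (qP_le_one hp hp1 R)

lemma length_sy_le_of_isFlat (hS : IsCarpetRatios a b) [Nonempty (Alph m n)] [Nonempty (Fin m)]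
    (hB : 0 < bP b B) (hσ : σ ∈ Psi a b l) (hXσ : insertAt σ.1.length B (sy σ) <+: V)
    (hXω : insertAt ω.1.length B (sy ω) <+: V)
    (hlong : (ω.1.length : ℤ) + A1 a b < (sy σ).length) {τ ρ : Wd m n} {t : ℕ}
    (hτ : τ ∈ Psi a b t) (hστ : σ.1 <+: τ.1) (hτω : sy τ <+: sy ω) (hρ : IsFlat a b τ ρ)
    (hρω : (sy ρ).length ≤ ω.1.length) : (sy τ).length ≤ ω.1.length := by
  by_contra! h
  have := length_sy_le_of_aP_le hS hB hσ hXσ hXω hτ.2.2.2 (hS.aP_le_of_prefix hστ) hτω h.le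
  have := hρ.length_sy_le hS hτ
  omega

lemma length_sy_le_of_etaLo_pow_le (hS : IsCarpetRatios a b) (hn : ∀ j, 1 ≤ n j)
    (hp : ∀ g, 0 < p g) (hp1 : ∑ g : Alph m n, p g = 1) (hr : 0 < r)
    [Nonempty (Alph m n)] [Nonempty (Fin m)] {N : ℕ} (hB : 0 < bP b B) (hσ : σ ∈ Psi a b l)
    (hl : 1 ≤ l) (hσE : Er a p r σ < etaLo a b p r ^ N)
    (hXσ : insertAt σ.1.length B (sy σ) <+: V) (hXω : insertAt ω.1.length B (sy ω) <+: V)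
    (hlong : (ω.1.length : ℤ) + A1 a b < (sy σ).length) :
    ∀ t, l ≤ t → ∀ τ ∈ Psi a b t, σ.1 <+: τ.1 → sy τ <+: sy ω →
      etaLo a b p r ^ N ≤ Er a p r τ → (sy τ).length ≤ ω.1.length := by
  intro t ht
  induction t, ht using Nat.le_induction with
  | base =>
    intro τ hτ hστ hτω hτE
    by_contra! h
    have hτσ : τ.1 = σ.1 := (hστ.eq_of_length (by rw [hτ.1, hσ.1])).symm
    have := Er_eq_of_fst_eq (r := r) hS hn hp hB hσ hXσ hXω hτ hτσ hτω h
    linarith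
  | succ t ht ih =>
    intro τ hτ hστ hτω hτE
    obtain ⟨ρ, hρ⟩ := exists_isFlat hS hτ (by omega)
    obtain ⟨-, hρΨ, hρ1, hρτ⟩ := hρ.resolve_left (by rw [hτ.1]; omega)
    rw [hτ.1, Nat.add_sub_cancel] at hρΨ
    have hσρ : σ.1 <+: ρ.1 := List.prefix_of_prefix_length_le hστ
      (hρ1 ▸ List.dropLast_prefix _) (by rw [hσ.1, hρΨ.1]; exact ht)
    exact length_sy_le_of_isFlat hS hB hσ hXσ hXω hlong hτ hστ hτω hρ
      (ih ρ hρΨ hσρ (hρτ.trans hτω) (hτE.trans (hρ.Er_le hS hp hp1 hr)))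

theorem false_of_insertAt_prefix (hS : IsCarpetRatios a b) (hn : ∀ j, 1 ≤ n j)
    (hp : ∀ g, 0 < p g) (hp1 : ∑ g : Alph m n, p g = 1) (hr : 0 < r)
    [Nonempty (Alph m n)] [Nonempty (Fin m)] {N : ℕ} (hN : T1 a b p r < N)
    (hσ : σ ∈ Lam a b p r N) (hω : ω ∈ Lam a b p r N) {ζ : List (Alph m n)}
    (hζ : σ.1 ++ ζ = ω.1) (hζne : ζ ≠ []) (hB : 0 < bP b B)
    (hXσ : insertAt σ.1.length B (sy σ) <+: V) (hXω : insertAt ω.1.length B (sy ω) <+: V) :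
    False := by
  obtain ⟨⟨l, hl, hσΨ⟩, -, -, -, hσE⟩ := hσ
  obtain ⟨⟨L, -, hωΨ⟩, ρ, hρ, hρE, -⟩ := hω
  have hL : L = l + ζ.length := by rw [← hωΨ.1, ← hσΨ.1, ← hζ, List.length_append]
  have hζ1 := List.length_pos_iff.2 hζne
  have hη := etaLo_pos (r := r) hS hn hp
  have hσ2 := A1_add_A5_add_three_lt_length_snd hS hn hp hp1 hr hN hσΨ hl hσE
  have hζA5 : (ζ.length : ℤ) ≤ A5 a b p r := by
    refine length_le_A5 hS hn hp hp1 hr (lt_of_mul_lt_mul_right ?_ (pow_pos hη N).le)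
    calc etaLo a b p r * etaLo a b p r ^ N ≤ etaLo a b p r * Er a p r ρ :=
          mul_le_mul_of_nonneg_left hρE hη.le
      _ ≤ Er a p r ω := hρ.etaLo_mul_Er_le hS hn hp hp1 hr hωΨ
      _ ≤ aP a ζ ^ r * Er a p r σ := Er_le_of_insertAt_prefix hS hn hp hp1 hB hσΨ hXσ hXω hωΨ hζ
      _ < aP a ζ ^ r * etaLo a b p r ^ N :=
          mul_lt_mul_of_pos_left hσE (Real.rpow_pos_of_pos (hS.aP_pos ζ) r)
  have hlong : (ω.1.length : ℤ) + A1 a b < (sy σ).length := by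
    rw [length_sy, hωΨ.1, hσΨ.1, hL]
    push_cast
    omega
  obtain ⟨-, hρΨ, hρ1, hρω⟩ := hρ.resolve_left (by rw [hωΨ.1]; omega)
  rw [hωΨ.1] at hρΨ
  have hρL := length_sy_le_of_etaLo_pow_le hS hn hp hp1 hr hB hσΨ hl hσE hXσ hXω hlong (L - 1)
    (by omega) ρ hρΨ (List.prefix_of_prefix_length_le ⟨ζ, hζ⟩ (hρ1 ▸ List.dropLast_prefix _)
      (by rw [hσΨ.1, hρΨ.1]; omega)) hρω hρE
  have hω := length_sy_le_of_isFlat hS hB hσΨ hXσ hXω hlong hωΨ ⟨ζ, hζ⟩ (List.prefix_refl _) hρ hρL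
  have := hωΨ.2.1
  rw [length_sy] at hω
  omega

end Comparison

theorem stmt8_general
    (m : ℕ) (n : Fin m → ℕ) (hn : ∀ j, 1 ≤ n j)
    (a : Alph m n → ℝ) (b : Fin m → ℝ)
    (hab : ∀ g : Alph m n, 0 < a g ∧ a g < b g.1 ∧ b g.1 < 1)
    (p : Alph m n → ℝ) (hp : ∀ g, 0 < p g) (hp1 : ∑ g : Alph m n, p g = 1)
    (r : ℝ) (hr : 0 < r)
    (j0 : Fin m) (hj0 : 2 ≤ n j0)
    (N : ℕ) (hN : T1 a b p r < (N : ℤ))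
    (σ ω : Wd m n) (hσ : σ ∈ Lam a b p r N) (hω : ω ∈ Lam a b p r N)
    (hL : σ.1 <+: ω.1) (hne : σ.1 ≠ ω.1)
    (σb ωb : Wd m n) (hσb : BarExt a b j0 hj0 σ σb) (hωb : BarExt a b j0 hj0 ω ωb) :
    ¬ sy σb <+: sy ωb ∧ ¬ sy ωb <+: sy σb := by
  have hS : IsCarpetRatios a b := ⟨fun g => (hab g).1, fun g => (hab g).2.1,
    fun j => (hab ⟨j, ⟨0, hn j⟩⟩).1.trans (hab _).2.1, fun j => (hab ⟨j, ⟨0, hn j⟩⟩).2.2⟩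
  have : Nonempty (Fin m) := ⟨j0⟩
  have : Nonempty (Alph m n) := ⟨⟨j0, ⟨0, hn j0⟩⟩⟩
  obtain ⟨ζ, hζ⟩ := hL
  have hζne : ζ ≠ [] := by rintro rfl; exact hne (by simpa using hζ)
  have key : ¬ sy σb <+: sy ωb := fun h =>
    false_of_insertAt_prefix hS hn hp hp1 hr hN hσ hω hζ hζne (hS.bP_pos _)
      (hσb.insertAt_sy_prefix.trans h) hωb.insertAt_sy_prefix
  refine ⟨key, fun h => key ?_⟩
  have ha : aP a ωb.1 ≤ aP a σb.1 := by
    rw [hσb.2.1, hωb.2.1, aP_append, aP_append]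
    exact mul_le_mul_of_nonneg_right (hS.aP_le_of_prefix ⟨ζ, hζ⟩) (hS.aP_pos _).le
  rw [sy_eq_of_sy_prefix hS hσb.1 hωb.1 ha h]

theorem stmt8
    (m : ℕ) (hm : 2 ≤ m) (n : Fin m → ℕ) (hn : ∀ j, 1 ≤ n j)
    (a : Alph m n → ℝ) (b : Fin m → ℝ)
    (hab : ∀ g : Alph m n, 0 < a g ∧ a g < b g.1 ∧ b g.1 < 1)
    (p : Alph m n → ℝ) (hp : ∀ g, 0 < p g) (hp1 : ∑ g : Alph m n, p g = 1)
    (r : ℝ) (hr : 0 < r)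
    (j0 : Fin m) (hj0 : 2 ≤ n j0)
    (N : ℕ) (hN : T1 a b p r < (N : ℤ))
    (σ ω : Wd m n) (hσ : σ ∈ Lam a b p r N) (hω : ω ∈ Lam a b p r N)
    (hL : σ.1 <+: ω.1) (hne : σ.1 ≠ ω.1)
    (σb ωb : Wd m n) (hσb : BarExt a b j0 hj0 σ σb) (hωb : BarExt a b j0 hj0 ω ωb) :
    ¬ sy σb <+: sy ωb ∧ ¬ sy ωb <+: sy σb :=
  stmt8_general m n hn a b hab p hp hp1 r hr j0 hj0 N hN σ ω hσ hω hL hne σb ωb hσb hωb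

end

end LGQ
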